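/- Let M be a map with an angle function having at least one edge. Then I_f + I_v = 2π, where I_f is the sum of the curvatures of all faces of M and I_v is the sum of the curvatures of all vertices of M. -/

import Mathlib

open scoped Classical

/-- An abstract combinatorial model of a finite map (a finite, connected and
simply-connected 2-complex embedded in the Euclidean plane), encoded by its
oriented edges (darts), vertices and faces, the boundary cycles of its faces,
its outer boundary cycle, and Euler's formula. -/
structure PMap where
  V : Type
  E : Type
  F : Type
  [vfin : Fintype V]
  [efin : Fintype E]
  [ffin : Fintype F]
  [vdec : DecidableEq V]
  [edec : DecidableEq E]
  [fdec : DecidableEq F]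
  /-- the inverse (oppositely oriented) edge -/
  inv : E → E
  inv_inv : ∀ e, inv (inv e) = e
  inv_ne : ∀ e, inv e ≠ e
  /-- the initial vertex of an oriented edge -/
  src : E → V
  /-- the boundary path of a face: a closed nonempty edge path -/
  bFace : F → List E
  bFace_ne : ∀ f, bFace f ≠ []
  bFace_chain : ∀ f, (bFace f).Chain' fun a b => src (inv a) = src b
  bFace_closed : ∀ f, ∀ a ∈ (bFace f).head?, ∀ b ∈ (bFace f).getLast?, src (inv b) = src a
  /-- the boundary path of the map: a closed edge path -/
  boundary : List E
  boundary_chain : boundary.Chain' fun a b => src (inv a) = src b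
  boundary_closed : ∀ a ∈ boundary.head?, ∀ b ∈ boundary.getLast?, src (inv b) = src a
  /-- every oriented edge occurs exactly once: either in the boundary cycle of
  exactly one face, or in the outer boundary cycle of the map -/
  dart_partition : ∀ e : E, boundary.count e + ∑ f : F, (bFace f).count e = 1
  /-- Euler's formula `V - E + F = 1` (each non-oriented edge is a pair of darts) -/
  euler : 2 * Fintype.card V + 2 * Fintype.card F = Fintype.card E + 2

attribute [instance] PMap.vfin PMap.efin PMap.ffin PMap.vdec PMap.edec PMap.fdec

namespace PMap

variable (M : PMap)

/-- The terminal vertex of an oriented edge. -/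
def tgt (e : M.E) : M.V := M.src (M.inv e)

/-- The degree of a vertex: the number of oriented edges starting at it. -/
def vdeg (o : M.V) : ℕ := (Finset.univ.filter fun e : M.E => M.src e = o).card

/-- The degree of a face: the length of its boundary path. -/
def fdeg (f : M.F) : ℕ := (M.bFace f).length

/-- The perimeter of the map: the length of its boundary path. -/
def perimeter : ℕ := M.boundary.length

/-- The area of the map: the number of its faces. -/
def area : ℕ := Fintype.card M.F

/-- The multiplicity of a vertex: the number of times the boundary path of the
map passes through it. -/
def mult (o : M.V) : ℕ := (M.boundary.map M.src).count o

/-- The exterior vertices: the vertices of the boundary path. -/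
def extVerts : Finset M.V := (M.boundary.map M.src).toFinset

/-- A vertex is exterior if it lies on the boundary path; otherwise interior. -/
def IsExtV (o : M.V) : Prop := o ∈ M.extVerts

/-- An edge is exterior if it belongs to the boundary path of the map. -/
def IsExtEdge (e : M.E) : Prop := e ∈ M.boundary ∨ M.inv e ∈ M.boundary

/-- A face is exterior if its boundary shares an edge with the boundary of the map. -/
def IsExtFace (f : M.F) : Prop := ∃ e ∈ M.bFace f, M.IsExtEdge e

/-- A face is weakly exterior if it shares a vertex with the boundary of the map. -/
def IsWeaklyExtFace (f : M.F) : Prop := ∃ e ∈ M.bFace f, M.src e ∈ M.extVerts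

/-- A face is strongly interior if it shares no vertex with the boundary of the map. -/
def StronglyInterior (f : M.F) : Prop := ¬ M.IsWeaklyExtFace f

/-- A `(p,q)`-map: every interior face has degree at least `p` and every
interior vertex has degree at least `q`. -/
def IsPQ (p q : ℕ) : Prop :=
  (∀ f, ¬ M.IsExtFace f → p ≤ M.fdeg f) ∧ (∀ o, ¬ M.IsExtV o → q ≤ M.vdeg o)

/-- A `{p,q}`-map: a `(p,q)`-map in which every face has degree at least `p`
and less than `2p`, and every vertex has degree less than `2q`. -/
def IsBracePQ (p q : ℕ) : Prop :=
  M.IsPQ p q ∧ (∀ f, p ≤ M.fdeg f ∧ M.fdeg f < 2 * p) ∧ (∀ o, M.vdeg o < 2 * q)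

/-- The map is simple if its boundary path is a simple closed curve. -/
def IsSimple : Prop := (M.boundary.map M.src).Nodup

/-- The `1`-skeleton of the map, as a simple graph. -/
def skel : SimpleGraph M.V where
  Adj u v := u ≠ v ∧ ∃ e, M.src e = u ∧ M.tgt e = v
  symm := by
    constructor
    rintro u v ⟨huv, e, h1, h2⟩
    refine ⟨huv.symm, M.inv e, h2, ?_⟩
    show M.src (M.inv (M.inv e)) = u
    rw [M.inv_inv]; exact h1
  loopless := by constructor; rintro u ⟨h, -⟩; exact h rfl

/-- The combinatorial path metric on the 1-skeleton. -/
noncomputable def dist (u v : M.V) : ℕ := M.skel.dist u v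

/-- The distance from a vertex to the boundary of the map. -/
noncomputable def distToBoundary (o : M.V) : ℕ :=
  sInf {d | ∃ b, M.IsExtV b ∧ M.dist o b = d}

/-- The radius of the map: the maximal distance from a vertex to the boundary. -/
noncomputable def radius : ℕ := sSup {d | ∃ o, M.distToBoundary o = d}

/-- The `(p,q)`-curvature `p - d(Π)` of a face. -/
noncomputable def faceCurv (p : ℝ) (f : M.F) : ℝ := p - M.fdeg f

/-- The `(p,q)`-curvature `(p/q)(q - d(o)) - μ(o)` of a vertex. -/
noncomputable def vertCurv (p q : ℝ) (o : M.V) : ℝ :=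
  p / q * (q - M.vdeg o) - M.mult o

/-- A flat map (submap) of curvature type `(p,q)`: every face has degree
exactly `p` and every interior vertex has degree exactly `q`. -/
def IsFlat (p q : ℕ) : Prop :=
  (∀ f, M.fdeg f = p) ∧ (∀ o, ¬ M.IsExtV o → M.vdeg o = q)

end PMap

/-- An inclusion of a map `N` into a map `M` as a submap. -/
structure SubmapIncl (N M : PMap) where
  vMap : N.V → M.V
  eMap : N.E → M.E
  fMap : N.F → M.F
  vInj : Function.Injective vMap
  eInj : Function.Injective eMap
  fInj : Function.Injective fMap
  src_comm : ∀ e, M.src (eMap e) = vMap (N.src e)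
  inv_comm : ∀ e, M.inv (eMap e) = eMap (N.inv e)
  face_comm : ∀ f, M.bFace (fMap f) = (N.bFace f).map eMap

/- **Maps with angle functions.**  A corner of a face `Π` at a vertex `o` is a
pair of consecutive oriented edges `e, f` of the boundary path of `Π` with
`e₊ = f₋ = o`; thus the corners of `Π` are in bijection with the oriented edges
of the boundary path of `Π`, a corner corresponding to the edge `e` it follows,
located at the vertex `tgt e`.  An angle function assigns a non-negative angle
to each such corner (edges on the outer boundary of the map bound no face and
carry no corner, so the angle function is required to vanish on them). -/

/-- `angle` is an angle function on the map `M`. -/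
def PMap.IsAngleFunction (M : PMap) (angle : M.E → ℝ) : Prop :=
  (∀ e, 0 ≤ angle e) ∧ ∀ e ∈ M.boundary, angle e = 0

/-- `Σ_Π`: the sum of the angles of the corners of the face `f`. -/
noncomputable def PMap.faceAngleSum (M : PMap) (angle : M.E → ℝ) (f : M.F) : ℝ :=
  ((M.bFace f).map angle).sum

/-- `Σ_o`: the sum of the angles of the corners at the vertex `o`. -/
noncomputable def PMap.vertAngleSum (M : PMap) (angle : M.E → ℝ) (o : M.V) : ℝ :=
  ∑ e : M.E, if M.tgt e = o then angle e else 0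

/-- The curvature `Σ_Π − π(d − 2)` of a face `Π` of degree `d`. -/
noncomputable def PMap.faceCurvA (M : PMap) (angle : M.E → ℝ) (f : M.F) : ℝ :=
  M.faceAngleSum angle f - Real.pi * ((M.fdeg f : ℝ) - 2)

/-- The curvature `(2 − μ(o))π − Σ_o` of a vertex `o`. -/
noncomputable def PMap.vertCurvA (M : PMap) (angle : M.E → ℝ) (o : M.V) : ℝ :=
  (2 - (M.mult o : ℝ)) * Real.pi - M.vertAngleSum angle o

/-- A `(δ,b)`-map: a map with an angle function such that the curvature of
every non-flat vertex and every non-flat face is at most `−δ`, and the degree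
of every vertex and every face is at most `b`. -/
def PMap.IsDeltaB (M : PMap) (angle : M.E → ℝ) (δ : ℝ) (b : ℕ) : Prop :=
  M.IsAngleFunction angle ∧
  (∀ f : M.F, M.faceCurvA angle f = 0 ∨ M.faceCurvA angle f ≤ -δ) ∧
  (∀ o : M.V, M.vertCurvA angle o = 0 ∨ M.vertCurvA angle o ≤ -δ) ∧
  (∀ f : M.F, M.fdeg f ≤ b) ∧ (∀ o : M.V, M.vdeg o ≤ b)

lemma gb_sum_count_eq_length {α : Type} [Fintype α] [DecidableEq α] (l : List α) :
    ∑ a : α, l.count a = l.length := by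
  induction l with
  | nil => simp
  | cons b l ih =>
    simp [List.count_cons, Finset.sum_add_distrib, ih, add_comm]

lemma gb_sum_map_eq {α : Type} [Fintype α] [DecidableEq α] (l : List α) (g : α → ℝ) :
    (l.map g).sum = ∑ a : α, (l.count a : ℝ) * g a := by
  induction l with
  | nil => simp
  | cons b l ih =>
    push_cast [List.count_cons, add_mul, Finset.sum_add_distrib]
    simp [ih, ite_mul, Finset.sum_ite_eq', add_comm]

/-- **a discrete Gauss–Bonnet formula.** Let `M` be a map with
an angle function having at least one edge.  Then `I_f + I_v = 2π`, where `I_f`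
is the sum of the curvatures of all faces of `M` and `I_v` is the sum of the
curvatures of all vertices of `M`. -/
theorem gauss_bonnet (M : PMap) (angle : M.E → ℝ) (hangle : M.IsAngleFunction angle)
    (hE : Nonempty M.E) :
    (∑ f : M.F, M.faceCurvA angle f) + (∑ o : M.V, M.vertCurvA angle o) =
      2 * Real.pi := by
  obtain ⟨hnn, hbd⟩ := hangle
  -- sum of vertex angle sums equals sum of all angles
  have hAngV : ∑ o : M.V, M.vertAngleSum angle o = ∑ e : M.E, angle e := by
    unfold PMap.vertAngleSum
    rw [Finset.sum_comm]
    simp [Finset.sum_ite_eq]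
  -- sum of face angle sums equals sum of all angles
  have hAngF : ∑ f : M.F, M.faceAngleSum angle f = ∑ e : M.E, angle e := by
    unfold PMap.faceAngleSum
    simp_rw [gb_sum_map_eq]
    rw [Finset.sum_comm]
    refine Finset.sum_congr rfl fun e _ => ?_
    rw [← Finset.sum_mul]
    by_cases he : e ∈ M.boundary
    · rw [hbd e he]; ring
    · have h0 : M.boundary.count e = 0 := List.count_eq_zero.mpr he
      have hp := M.dart_partition e
      rw [h0, zero_add] at hp
      have : (∑ f : M.F, ((M.bFace f).count e : ℝ)) = 1 := by
        exact_mod_cast hp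
      rw [this, one_mul]
  -- sum of face degrees
  have hD : (∑ f : M.F, (M.fdeg f : ℝ)) + (M.boundary.length : ℝ)
      = (Fintype.card M.E : ℝ) := by
    have hN : (∑ f : M.F, M.fdeg f) + M.boundary.length = Fintype.card M.E := by
      have h1 : ∀ f : M.F, M.fdeg f = ∑ e : M.E, (M.bFace f).count e := fun f =>
        (gb_sum_count_eq_length _).symm
      have h2 : M.boundary.length = ∑ e : M.E, M.boundary.count e :=
        (gb_sum_count_eq_length _).symm
      simp_rw [h1, h2]
      rw [Finset.sum_comm, ← Finset.sum_add_distrib]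
      simp [add_comm, M.dart_partition]
    push_cast [← hN]; ring
  -- sum of multiplicities
  have hMu : (∑ o : M.V, (M.mult o : ℝ)) = (M.boundary.length : ℝ) := by
    have : (∑ o : M.V, M.mult o) = M.boundary.length := by
      have := gb_sum_count_eq_length (M.boundary.map M.src)
      simpa [PMap.mult] using this
    exact_mod_cast this
  -- Euler's formula over ℝ
  have hEu : 2 * (Fintype.card M.V : ℝ) + 2 * (Fintype.card M.F : ℝ)
      = (Fintype.card M.E : ℝ) + 2 := by
    have h := M.euler
    have : ((2 * Fintype.card M.V + 2 * Fintype.card M.F : ℕ) : ℝ) = ((Fintype.card M.E + 2 : ℕ) : ℝ) := by rw [h]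
    push_cast at this; linarith
  -- assemble
  simp only [PMap.faceCurvA, PMap.vertCurvA, Finset.sum_sub_distrib]
  rw [← Finset.mul_sum, ← Finset.sum_mul, Finset.sum_sub_distrib,
    Finset.sum_sub_distrib, Finset.sum_const, Finset.sum_const, Finset.card_univ,
    Finset.card_univ, nsmul_eq_mul, nsmul_eq_mul, hAngF, hAngV]
  ring_nf
  nlinarith [hD, hMu, hEu, Real.pi_pos]
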